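/- arXiv:2411.04394 — 2 statements merged into one kernel-verified Lean document; each statement's English description precedes it below -/
import Mathlib

section
/- (From traversal avoidance to a risk lower bound, tree version.) Let f*_0 = Σ_{S∈𝒮} α_S χ_S be any function, let f̂ be a regression tree model fit using a regression tree algorithm, let 𝒮' ⊆ 𝒮 be a subcollection, and let T ⊆ {1,…,d} be any set with |T ∩ S| ≥ 2 for each S ∈ 𝒮'. Then the expected L² risk satisfies 𝔯(f̂, f*_0, d, n) ≥ (1 − δ) · Σ_{S∈𝒮'} α_S², where δ := max_{x ∈ {−1,1}^d} P{ J(x; D_n, Θ) ∩ T ≠ ∅ }. -/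
open MeasureTheory ProbabilityTheory

namespace GreedyTrees

/-- The `±1` value of a Boolean coordinate. -/
def sgn (b : Bool) : ℝ := if b then 1 else -1

variable {d n : ℕ}

/-- The Fourier character (monomial) `χ_S` on the Boolean cube `{±1}^d`. -/
def chi (S : Finset (Fin d)) (x : Fin d → Bool) : ℝ := ∏ j ∈ S, sgn (x j)

/-- Expectation with respect to the uniform distribution on `{±1}^d`. -/
noncomputable def cubeMean (f : (Fin d → Bool) → ℝ) : ℝ := (∑ x : Fin d → Bool, f x) / 2 ^ d

/-- The `L²` risk `R(g, f) = E_{X ∼ ν} (g X - f X)²` for `ν` uniform on `{±1}^d`. -/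
noncomputable def cubeRisk (g f : (Fin d → Bool) → ℝ) : ℝ := cubeMean fun x => (g x - f x) ^ 2

/-- Variance with respect to the uniform distribution on `{±1}^d`. -/
noncomputable def cubeVar (f : (Fin d → Bool) → ℝ) : ℝ := cubeMean fun x => (f x - cubeMean f) ^ 2

/-- Supremum norm of a function on the cube. -/
noncomputable def supAbs (f : (Fin d → Bool) → ℝ) : ℝ := ⨆ x, |f x|

/-- Fourier coefficient `α_S` of `f`. -/
noncomputable def fourierCoeff (f : (Fin d → Bool) → ℝ) (S : Finset (Fin d)) : ℝ :=
  cubeMean fun x => f x * chi S x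

open Classical in
/-- Fourier support `𝒮` of `f` : subsets with nonzero Fourier coefficient. -/
noncomputable def fourierSupport (f : (Fin d → Bool) → ℝ) : Finset (Finset (Fin d)) :=
  Finset.univ.filter fun S => fourierCoeff f S ≠ 0

/-- Union of a list of finsets. -/
def listUnion (L : List (Finset (Fin d))) : Finset (Fin d) := L.foldr (· ∪ ·) ∅

/-- Staircase condition: each entry brings in at most one new coordinate. -/
def Staircase (L : List (Finset (Fin d))) : Prop :=
  ∀ (i : ℕ) (h : i < L.length), ((L.get ⟨i, h⟩) \ listUnion (L.take i)).card ≤ 1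

/-- The merged-staircase property (MSP) of a collection of subsets. -/
def MSP (Sc : Finset (Finset (Fin d))) : Prop :=
  ∃ L : List (Finset (Fin d)), L.toFinset = Sc ∧ L.Nodup ∧ Staircase L

/-- `S` is connected to `∅` in the Fourier graph of the collection `Sc`. -/
def ReachesEmpty (Sc : Finset (Finset (Fin d))) (S : Finset (Fin d)) : Prop :=
  ∃ L : List (Finset (Fin d)), (∀ T ∈ L, T ∈ Sc) ∧ S ∈ L ∧ Staircase L

open Classical in
/-- `𝒮_MSP` : the part of the collection connected to `∅` in the Fourier graph. -/
noncomputable def mspPart (Sc : Finset (Finset (Fin d))) : Finset (Finset (Fin d)) :=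
  Sc.filter fun S => ReachesEmpty Sc S

/-- `T` is a traversal of a collection: it meets every member in ≥ 2 coordinates. -/
def IsTraversal (Sc : Finset (Finset (Fin d))) (T : Finset (Fin d)) : Prop :=
  ∀ S ∈ Sc, 2 ≤ (T ∩ S).card

/-- The MSP residual `r_MSP = Σ_{S ∈ 𝒮 \ 𝒮_MSP} α_S χ_S` of `f`. -/
noncomputable def mspResidual (f : (Fin d → Bool) → ℝ) : (Fin d → Bool) → ℝ :=
  fun x => ∑ S ∈ fourierSupport f \ mspPart (fourierSupport f), fourierCoeff f S * chi S x

/-- Total Fourier weight `w(𝒜) = Σ_{S ∈ 𝒜} α_S²` of a collection of vertices. -/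
noncomputable def wt (f : (Fin d → Bool) → ℝ) (A : Finset (Finset (Fin d))) : ℝ :=
  ∑ S ∈ A, fourierCoeff f S ^ 2

/-- The subcube (cell) `{x : x_j = z_j for j ∈ J}` as a finset of points. -/
def subcube (J : Finset (Fin d)) (z : Fin d → Bool) : Finset (Fin d → Bool) :=
  Finset.univ.filter fun x => ∀ j ∈ J, x j = z j

/-- Conditional mean of `f` on a subcube. -/
noncomputable def subcubeMean (f : (Fin d → Bool) → ℝ) (J : Finset (Fin d))
    (z : Fin d → Bool) : ℝ :=
  (∑ x ∈ subcube J z, f x) / (subcube J z).card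

/-- Conditional covariance of `f` and `g` on a subcube. -/
noncomputable def subcubeCov (f g : (Fin d → Bool) → ℝ) (J : Finset (Fin d))
    (z : Fin d → Bool) : ℝ :=
  (∑ x ∈ subcube J z, (f x - subcubeMean f J z) * (g x - subcubeMean g J z)) /
    (subcube J z).card

/-- Conditional variance of `f` on a subcube. -/
noncomputable def subcubeVar (f : (Fin d → Bool) → ℝ) (J : Finset (Fin d))
    (z : Fin d → Bool) : ℝ :=
  subcubeCov f f J z

/-- The restriction of `f` to the subcube `(J, z)` viewed as a function of the
free coordinates. -/
def restrictCube (f : (Fin d → Bool) → ℝ) (J : Finset (Fin d)) (z : Fin d → Bool) :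
    (Fin d → Bool) → ℝ :=
  fun x => f fun j => if j ∈ J then z j else x j

/-- `f` (as a function) satisfies the merged-staircase property. -/
def MSPfun (f : (Fin d → Bool) → ℝ) : Prop := MSP (fourierSupport f)

/-- `f` satisfies the stable merged-staircase property: every restriction to a
subcube satisfies MSP. -/
def SMSPfun (f : (Fin d → Bool) → ℝ) : Prop :=
  ∀ (J : Finset (Fin d)) (z : Fin d → Bool), MSPfun (restrictCube f J z)

/-- `f ∈ SMSP(λ)` : for every subcube on which `f` is nonconstant,
`max_{k ∉ J(C)} Cov²(f(X), X_k | X ∈ C) · 2^{-|J(C) ∩ S*|} ≥ λ`. -/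
def SMSPlam (f : (Fin d → Bool) → ℝ) (Sstar : Finset (Fin d)) (lam : ℝ) : Prop :=
  ∀ (J : Finset (Fin d)) (z : Fin d → Bool),
    (∃ x ∈ subcube J z, ∃ y ∈ subcube J z, f x ≠ f y) →
    ∃ k ∉ J, lam ≤ (subcubeCov f (fun y => sgn (y k)) J z) ^ 2 *
      ((2 : ℝ) ^ (J ∩ Sstar).card)⁻¹

/-- Sub-Gaussian random variable with parameter `σ` (via the MGF bound). -/
def IsSubGaussian {Ω : Type*} [MeasurableSpace Ω] (μ : Measure Ω) (Z : Ω → ℝ)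
    (σ : ℝ) : Prop :=
  ∀ t : ℝ, ∫ ω, Real.exp (t * Z ω) ∂μ ≤ Real.exp (σ ^ 2 * t ^ 2 / 2)

/-- Indices of the samples lying in the cell determined by the values of `x`
on the coordinates in `J`. -/
def cellIdx (X : Fin n → Fin d → Bool) (x : Fin d → Bool) (J : Finset (Fin d)) :
    Finset (Fin n) :=
  Finset.univ.filter fun i => ∀ j ∈ J, X i j = x j

/-- Value of a split criterion `F` at coordinate `k` in a cell: it depends on
the data only through the marginal data `{(X_{ik}, Y_i) : i in the cell}`. -/
def critVal (F : Multiset (Bool × ℝ) → ℝ) (X : Fin n → Fin d → Bool) (Y : Fin n → ℝ)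
    (x : Fin d → Bool) (J : Finset (Fin d)) (k : Fin d) : ℝ :=
  F ((cellIdx X x J).val.map fun i => (X i k, Y i))

/-- Abstract model of a regression tree fitted by a greedy tree algorithm:
for every dataset and query point it records the coordinates split on along the
root-to-leaf path of the query point.  Each split coordinate maximizes a fixed
sign-flip invariant criterion `F` of the marginal data in the current cell,
every split cell contains at least one sample, and the path depends on the
query point only through the coordinates split along it (tree structure). -/
structure GreedyTreeModel (n d : ℕ) where
  F : Multiset (Bool × ℝ) → ℝ
  flip_invariant : ∀ m : Multiset (Bool × ℝ), F (m.map fun p => (!p.1, p.2)) = F m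
  splits : (Fin n → Fin d → Bool) → (Fin n → ℝ) → (Fin d → Bool) → List (Fin d)
  nodup : ∀ X Y x, (splits X Y x).Nodup
  greedy : ∀ X Y x (t : ℕ) (ht : t < (splits X Y x).length) (k : Fin d),
      k ∉ ((splits X Y x).take t).toFinset →
      critVal F X Y x ((splits X Y x).take t).toFinset k ≤
        critVal F X Y x ((splits X Y x).take t).toFinset ((splits X Y x).get ⟨t, ht⟩)
  nonempty_internal : ∀ X Y x (t : ℕ), t < (splits X Y x).length →
      (cellIdx X x ((splits X Y x).take t).toFinset).Nonempty
  consistent : ∀ X Y x x', (∀ j ∈ splits X Y x, x j = x' j) → splits X Y x' = splits X Y x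

/-- The set `J(x; D_n, Θ)` of coordinates split along the query path of `x`. -/
def GreedyTreeModel.queryCoords (M : GreedyTreeModel n d) (X : Fin n → Fin d → Bool)
    (Y : Fin n → ℝ) (x : Fin d → Bool) : Finset (Fin d) :=
  (M.splits X Y x).toFinset

/-- Prediction of the fitted tree: the mean response in the leaf containing `x`. -/
noncomputable def GreedyTreeModel.pred (M : GreedyTreeModel n d)
    (X : Fin n → Fin d → Bool) (Y : Fin n → ℝ) (x : Fin d → Bool) : ℝ :=
  (∑ i ∈ cellIdx X x (M.queryCoords X Y x), Y i) /
    (cellIdx X x (M.queryCoords X Y x)).card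

/-- Mean of a multiset of reals. -/
noncomputable def msetMean (m : Multiset ℝ) : ℝ := m.sum / (m.card : ℝ)

/-- Empirical variance (impurity) of a multiset of reals. -/
noncomputable def msetVar (m : Multiset ℝ) : ℝ :=
  ((m.map fun y => (y - msetMean m) ^ 2).sum) / (m.card : ℝ)

/-- The CART impurity decrease, as a function of the marginal data
`{(X_{ik}, Y_i)}` of a coordinate in a cell. -/
noncomputable def impurityDecrease (m : Multiset (Bool × ℝ)) : ℝ :=
  msetVar (m.map Prod.snd) -
    (((m.filter fun p => p.1 = true).card : ℝ) / (m.card : ℝ)) *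
      msetVar ((m.filter fun p => p.1 = true).map Prod.snd) -
    (((m.filter fun p => p.1 = false).card : ℝ) / (m.card : ℝ)) *
      msetVar ((m.filter fun p => p.1 = false).map Prod.snd)

/-- A CART model: a greedy tree model whose criterion is the impurity decrease,
grown with the minimum impurity decrease stopping rule with threshold `γ`. -/
structure CARTModel (n d : ℕ) (γ : ℝ) extends GreedyTreeModel n d where
  F_eq : F = impurityDecrease
  continue_split : ∀ X Y x (t : ℕ) (ht : t < (splits X Y x).length),
      γ ≤ (((cellIdx X x ((splits X Y x).take t).toFinset).card : ℝ) / (n : ℝ)) *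
        critVal impurityDecrease X Y x ((splits X Y x).take t).toFinset
          ((splits X Y x).get ⟨t, ht⟩)
  stop_leaf : ∀ X Y x (k : Fin d), k ∉ (splits X Y x).toFinset →
      (((cellIdx X x (splits X Y x).toFinset).card : ℝ) / (n : ℝ)) *
        critVal impurityDecrease X Y x (splits X Y x).toFinset k < γ

/-- Number of samples in the subcube `(J, z)`. -/
def cellN (X : Fin n → Fin d → Bool) (J : Finset (Fin d)) (z : Fin d → Bool) : ℕ :=
  (cellIdx X z J).card

/-- Mean response over the samples in the subcube `(J, z)`. -/
noncomputable def cellYbar (X : Fin n → Fin d → Bool) (Y : Fin n → ℝ)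
    (J : Finset (Fin d)) (z : Fin d → Bool) : ℝ :=
  (∑ i ∈ cellIdx X z J, Y i) / (cellN X J z : ℝ)

/-- Empirical square-root impurity decrease
`Δ̂^{1/2}(k; C, D) = √(p_k(C)(1 - p_k(C))) (Ȳ_{T_{k,1}C} - Ȳ_{T_{k,-1}C})`. -/
noncomputable def empSqrtID (X : Fin n → Fin d → Bool) (Y : Fin n → ℝ)
    (J : Finset (Fin d)) (z : Fin d → Bool) (k : Fin d) : ℝ :=
  Real.sqrt (((cellN X (insert k J) (Function.update z k true) : ℝ) / (cellN X J z : ℝ)) *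
      (1 - (cellN X (insert k J) (Function.update z k true) : ℝ) / (cellN X J z : ℝ))) *
    (cellYbar X Y (insert k J) (Function.update z k true) -
      cellYbar X Y (insert k J) (Function.update z k false))

/-- Population square-root impurity decrease
`Δ^{1/2}(k; C) = (E[Y | X ∈ T_{k,1}C] - E[Y | X ∈ T_{k,-1}C]) / 2`
(for zero-mean noise, conditional means of `Y` equal conditional means of `f*`). -/
noncomputable def popSqrtID (f : (Fin d → Bool) → ℝ) (J : Finset (Fin d))
    (z : Fin d → Bool) (k : Fin d) : ℝ :=
  (subcubeMean f (insert k J) (Function.update z k true) -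
    subcubeMean f (insert k J) (Function.update z k false)) / 2

/-- Binary decision tree with axis-aligned splits and real leaf labels. -/
inductive TreeFun (d : ℕ) : Type
  | leaf : ℝ → TreeFun d
  | node : Fin d → TreeFun d → TreeFun d → TreeFun d

/-- Evaluation of a tree as a piecewise constant function on the cube. -/
def TreeFun.eval : TreeFun d → (Fin d → Bool) → ℝ
  | .leaf c, _ => c
  | .node k l r, x => if x k then TreeFun.eval r x else TreeFun.eval l x

/-- Depth of a tree. -/
def TreeFun.depth : TreeFun d → ℕ
  | .leaf _ => 0
  | .node _ l r => max (TreeFun.depth l) (TreeFun.depth r) + 1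

/-- All leaf labels bounded by `M` in absolute value. -/
def TreeFun.leafBound (M : ℝ) : TreeFun d → Prop
  | .leaf c => |c| ≤ M
  | .node _ l r => TreeFun.leafBound M l ∧ TreeFun.leafBound M r

/-- Empirical `L²` risk of a tree on a dataset. -/
noncomputable def empRisk (D : Fin n → (Fin d → Bool) × ℝ) (t : TreeFun d) : ℝ :=
  (∑ i, ((D i).2 - t.eval (D i).1) ^ 2) / n

/-- A greedy tree grown along the query path of a point with every cell being
split (no stopping rule): the path has full length `d`. -/
structure FullGreedyPath (n d : ℕ) where
  F : Multiset (Bool × ℝ) → ℝ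
  flip_invariant : ∀ m : Multiset (Bool × ℝ), F (m.map fun p => (!p.1, p.2)) = F m
  splits : (Fin n → Fin d → Bool) → (Fin n → ℝ) → (Fin d → Bool) → List (Fin d)
  nodup : ∀ X Y x, (splits X Y x).Nodup
  length_eq : ∀ X Y x, (splits X Y x).length = d
  greedy : ∀ X Y x (t : ℕ) (ht : t < (splits X Y x).length) (k : Fin d),
      k ∉ ((splits X Y x).take t).toFinset →
      critVal F X Y x ((splits X Y x).take t).toFinset k ≤
        critVal F X Y x ((splits X Y x).take t).toFinset ((splits X Y x).get ⟨t, ht⟩)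

/-!
If the tree does not split on a coordinate of `T` along the path of `x`, its prediction is
constant on the fibre `{x' : x'_j = x_j for j ∉ T}`, so its squared error on that fibre is at
least the conditional variance `Var(f*_0 | x_{Tᶜ})`. For every `x` this happens with
probability at least `1 - δ`, so the expected risk is at least `(1 - δ) E Var(f*_0 | x_{Tᶜ})`.
Each `S ∈ 𝒮'` meets `T`, so `χ_S` is orthogonal to every function of `x_{Tᶜ}`; hence the
Fourier coefficients of `f*_0 - E[f*_0 | x_{Tᶜ}]` on `𝒮'` are the `α_S`, and Bessel's
inequality gives `E Var(f*_0 | x_{Tᶜ}) = ‖f*_0 - E[f*_0 | x_{Tᶜ}]‖² ≥ Σ_{S ∈ 𝒮'} α_S²`.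
-/

lemma cubeMean_add (f g : (Fin d → Bool) → ℝ) :
    cubeMean (fun x => f x + g x) = cubeMean f + cubeMean g := by
  simp only [cubeMean, Finset.sum_add_distrib, add_div]

lemma cubeMean_sub (f g : (Fin d → Bool) → ℝ) :
    cubeMean (fun x => f x - g x) = cubeMean f - cubeMean g := by
  simp only [cubeMean, Finset.sum_sub_distrib, sub_div]

lemma cubeMean_const_mul (c : ℝ) (f : (Fin d → Bool) → ℝ) :
    cubeMean (fun x => c * f x) = c * cubeMean f := by
  simp only [cubeMean, ← Finset.mul_sum, mul_div_assoc]

lemma cubeMean_const (c : ℝ) : cubeMean (fun _ : Fin d → Bool => c) = c := by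
  simp [cubeMean]

lemma cubeMean_sum {ι : Type*} (s : Finset ι) (f : ι → (Fin d → Bool) → ℝ) :
    cubeMean (fun x => ∑ i ∈ s, f i x) = ∑ i ∈ s, cubeMean (f i) := by
  simp only [cubeMean, Finset.sum_div]
  exact Finset.sum_comm

lemma cubeMean_mono {f g : (Fin d → Bool) → ℝ} (h : ∀ x, f x ≤ g x) :
    cubeMean f ≤ cubeMean g :=
  div_le_div_of_nonneg_right (Finset.sum_le_sum fun x _ => h x) (by positivity)

lemma cubeMean_nonneg {f : (Fin d → Bool) → ℝ} (h : ∀ x, 0 ≤ f x) : 0 ≤ cubeMean f := by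
  simpa [cubeMean_const] using cubeMean_mono h

lemma cubeVar_nonneg (g : (Fin d → Bool) → ℝ) : 0 ≤ cubeVar g :=
  cubeMean_nonneg fun _ => sq_nonneg _

lemma cubeVar_le_cubeMean_sq_sub (g : (Fin d → Bool) → ℝ) (c : ℝ) :
    cubeVar g ≤ cubeMean fun x => (c - g x) ^ 2 := by
  have hsplit : ∀ x, (c - g x) ^ 2 =
      (g x - cubeMean g) ^ 2 +
        ((2 * (cubeMean g - c)) * (g x - cubeMean g) + (c - cubeMean g) ^ 2) :=
    fun x => by ring
  simp only [hsplit, cubeMean_add, cubeMean_const_mul, cubeMean_sub, cubeMean_const, cubeVar]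
  nlinarith [sq_nonneg (c - cubeMean g)]

lemma sgn_mul_self (b : Bool) : sgn b * sgn b = 1 := by
  cases b <;> norm_num [sgn]

lemma chi_mul_chi (S S' : Finset (Fin d)) (x : Fin d → Bool) :
    chi S x * chi S' x = chi (symmDiff S S') x := by
  rw [chi, chi, chi, ← Finset.prod_union_inter, symmDiff_eq_sup_sdiff_inf,
    ← Finset.prod_sdiff (Finset.inter_subset_union : S ∩ S' ⊆ S ∪ S'), mul_assoc,
    ← Finset.prod_mul_distrib]
  simp [sgn_mul_self]

lemma cubeMean_chi {U : Finset (Fin d)} (hU : U.Nonempty) : cubeMean (chi U) = 0 := by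
  obtain ⟨j, hj⟩ := hU
  have hfactor :
      ∑ x : Fin d → Bool, chi U x = ∏ i, ∑ b : Bool, if i ∈ U then sgn b else 1 := by
    rw [Fintype.prod_sum]
    simp [chi]
  rw [cubeMean, hfactor, Finset.prod_eq_zero (Finset.mem_univ j) (by simp [hj, sgn]), zero_div]

lemma cubeMean_chi_mul_chi (S S' : Finset (Fin d)) :
    cubeMean (fun x => chi S x * chi S' x) = if S = S' then 1 else 0 := by
  simp_rw [chi_mul_chi]
  split_ifs with h
  · simp [h, chi, cubeMean_const]
  · exact cubeMean_chi (Finset.symmDiff_nonempty.2 h)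

lemma chi_piecewise (T S : Finset (Fin d)) (a b : Fin d → Bool) :
    chi S (T.piecewise a b) = chi (S ∩ T) a * chi (S \ T) b := by
  rw [chi, ← Finset.prod_inter_mul_prod_sdiff S T]
  congr 1
  · exact Finset.prod_congr rfl fun j hj =>
      by rw [Finset.piecewise_eq_of_mem _ _ _ (Finset.mem_inter.1 hj).2]
  · exact Finset.prod_congr rfl fun j hj =>
      by rw [Finset.piecewise_eq_of_notMem _ _ _ (Finset.mem_sdiff.1 hj).2]

lemma fourierCoeff_sub (f g : (Fin d → Bool) → ℝ) (S : Finset (Fin d)) :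
    fourierCoeff (fun x => f x - g x) S = fourierCoeff f S - fourierCoeff g S := by
  simp only [fourierCoeff, sub_mul, cubeMean_sub]

lemma cubeMean_mul_sum_chi (g : (Fin d → Bool) → ℝ) (A : Finset (Finset (Fin d)))
    (c : Finset (Fin d) → ℝ) :
    cubeMean (fun x => g x * ∑ S ∈ A, c S * chi S x) = ∑ S ∈ A, c S * fourierCoeff g S := by
  simp only [fourierCoeff, ← cubeMean_const_mul, ← cubeMean_sum, Finset.mul_sum]
  congr 1
  funext x
  exact Finset.sum_congr rfl fun S _ => by ring

lemma fourierCoeff_sum_chi {A : Finset (Finset (Fin d))} {S : Finset (Fin d)} (hS : S ∈ A)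
    (c : Finset (Fin d) → ℝ) : fourierCoeff (fun x => ∑ S' ∈ A, c S' * chi S' x) S = c S := by
  simp only [fourierCoeff, mul_comm _ (chi S _), cubeMean_mul_sum_chi, cubeMean_chi_mul_chi]
  simp [hS]

theorem sum_sq_fourierCoeff_le (g : (Fin d → Bool) → ℝ) (A : Finset (Finset (Fin d))) :
    ∑ S ∈ A, fourierCoeff g S ^ 2 ≤ cubeMean fun x => g x ^ 2 := by
  set p : (Fin d → Bool) → ℝ := fun x => ∑ S ∈ A, fourierCoeff g S * chi S x
  have hgp : cubeMean (fun x => g x * p x) = ∑ S ∈ A, fourierCoeff g S ^ 2 := by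
    simp only [p, cubeMean_mul_sum_chi, sq]
  have hpp : cubeMean (fun x => p x * p x) = ∑ S ∈ A, fourierCoeff g S ^ 2 := by
    simp only [p, cubeMean_mul_sum_chi]
    exact Finset.sum_congr rfl fun S hS => by rw [fourierCoeff_sum_chi hS, sq]
  have hexpand : ∀ x, (g x - p x) ^ 2 = g x ^ 2 - (2 * (g x * p x) - p x * p x) :=
    fun x => by ring
  have hnonneg := cubeMean_nonneg fun x => sq_nonneg (g x - p x)
  simp only [hexpand, cubeMean_sub, cubeMean_const_mul, hgp, hpp] at hnonneg
  linarith

section Fibres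

variable (T : Finset (Fin d))

theorem cubeMean_cubeMean_piecewise (f : (Fin d → Bool) → ℝ) :
    (cubeMean fun b => cubeMean fun a => f (T.piecewise a b)) = cubeMean f := by
  have hinv : Function.Involutive fun p : (Fin d → Bool) × (Fin d → Bool) =>
      (T.piecewise p.1 p.2, T.piecewise p.2 p.1) := by
    rintro ⟨a, b⟩
    ext j <;> by_cases hj : j ∈ T <;> simp [Finset.piecewise, hj]
  have hswap := Fintype.sum_equiv hinv.toPerm (fun p => f (T.piecewise p.1 p.2))
    (fun p => f p.1) fun _ => rfl
  simp only [Fintype.sum_prod_type, Finset.sum_const, Finset.card_univ, Fintype.card_fun,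
    Fintype.card_bool, Fintype.card_fin, nsmul_eq_mul] at hswap
  simp only [cubeMean, ← Finset.sum_div]
  rw [Finset.sum_comm, hswap, ← Finset.mul_sum]
  push_cast
  field_simp

/-- `fiberMean T f x = E[f | x_{Tᶜ}]`: the coordinates of `x` in `T` are averaged out. -/
noncomputable def fiberMean (f : (Fin d → Bool) → ℝ) (x : Fin d → Bool) : ℝ :=
  cubeMean fun a => f (T.piecewise a x)

noncomputable def fiberVar (f : (Fin d → Bool) → ℝ) (x : Fin d → Bool) : ℝ :=
  cubeVar fun a => f (T.piecewise a x)

lemma fiberMean_piecewise (f : (Fin d → Bool) → ℝ) (a x : Fin d → Bool) :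
    fiberMean T f (T.piecewise a x) = fiberMean T f x := by
  simp only [fiberMean, Finset.piecewise_idem_right]

lemma fourierCoeff_fiberMean (f : (Fin d → Bool) → ℝ) {S : Finset (Fin d)}
    (hS : (S ∩ T).Nonempty) : fourierCoeff (fiberMean T f) S = 0 := by
  have hfactor : ∀ a b, fiberMean T f (T.piecewise a b) * chi S (T.piecewise a b) =
      (fiberMean T f b * chi (S \ T) b) * chi (S ∩ T) a := fun a b => by
    rw [fiberMean_piecewise, chi_piecewise]
    ring
  rw [fourierCoeff,
    ← cubeMean_cubeMean_piecewise T (fun x => fiberMean T f x * chi S x)]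
  simp only [hfactor, cubeMean_const_mul, cubeMean_chi hS, mul_zero, cubeMean_const]

lemma cubeMean_fiberVar (f : (Fin d → Bool) → ℝ) :
    cubeMean (fiberVar T f) = cubeMean fun x => (f x - fiberMean T f x) ^ 2 := by
  rw [← cubeMean_cubeMean_piecewise T (fun x => (f x - fiberMean T f x) ^ 2)]
  simp only [fiberMean_piecewise]
  rfl

theorem sum_sq_fourierCoeff_le_cubeMean_fiberVar (f : (Fin d → Bool) → ℝ)
    {A : Finset (Finset (Fin d))} (hA : ∀ S ∈ A, (S ∩ T).Nonempty) :
    ∑ S ∈ A, fourierCoeff f S ^ 2 ≤ cubeMean (fiberVar T f) := by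
  calc ∑ S ∈ A, fourierCoeff f S ^ 2
      = ∑ S ∈ A, fourierCoeff (fun x => f x - fiberMean T f x) S ^ 2 :=
        Finset.sum_congr rfl fun S hS => by
          rw [fourierCoeff_sub, fourierCoeff_fiberMean T f (hA S hS), sub_zero]
    _ ≤ cubeMean (fiberVar T f) := by
        rw [cubeMean_fiberVar]
        exact sum_sq_fourierCoeff_le _ A

theorem cubeMean_indicator_fiberVar_le_cubeRisk (f g : (Fin d → Bool) → ℝ)
    (E : Set (Fin d → Bool)) (hg : ∀ x ∉ E, ∀ a, g x = g (T.piecewise a x)) :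
    cubeMean (Eᶜ.indicator (fiberVar T f)) ≤ cubeRisk g f := by
  rw [cubeRisk, ← cubeMean_cubeMean_piecewise T (fun x => (g x - f x) ^ 2)]
  refine cubeMean_mono fun x => ?_
  by_cases hx : x ∈ E
  · simpa [hx] using cubeMean_nonneg fun a => sq_nonneg _
  · simp only [Set.indicator_of_mem (Set.mem_compl hx), fiberVar, ← hg x hx]
    exact cubeVar_le_cubeMean_sq_sub _ _

end Fibres

theorem ofReal_mul_sum_le_lintegral_sum_indicator_compl {Ω ι : Type*} [MeasurableSpace Ω]
    {μ : Measure Ω} [IsProbabilityMeasure μ] [Fintype ι] {E : ι → Set Ω}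
    (hE : ∀ i, MeasurableSet (E i)) {w : ι → ℝ} (hw : ∀ i, 0 ≤ w i) {δ : ℝ}
    (hδ : ∀ i, μ.real (E i) ≤ δ) :
    ENNReal.ofReal ((1 - δ) * ∑ i, w i) ≤
      ∫⁻ ω, ENNReal.ofReal (∑ i, (E i)ᶜ.indicator (fun _ => w i) ω) ∂μ := by
  have hint : ∀ i, Integrable ((E i)ᶜ.indicator fun _ => w i) μ :=
    fun i => (integrable_const _).indicator (hE i).compl
  rw [← ofReal_integral_eq_lintegral_ofReal (integrable_finsetSum _ fun i _ => hint i)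
    (ae_of_all _ fun ω => Finset.sum_nonneg fun i _ => Set.indicator_nonneg (fun _ _ => hw i) ω)]
  refine ENNReal.ofReal_le_ofReal ?_
  rw [integral_finsetSum _ fun i _ => hint i, Finset.mul_sum]
  refine Finset.sum_le_sum fun i _ => ?_
  rw [integral_indicator_const _ (hE i).compl, probReal_compl_eq_one_sub (hE i), smul_eq_mul]
  exact mul_le_mul_of_nonneg_right (by linarith [hδ i]) (hw i)

theorem traversal_avoidance_risk_lower_bound_tree_general
    {Ω : Type} [MeasurableSpace Ω]
    (μ : Measure Ω) [IsProbabilityMeasure μ]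
    (d : ℕ)
    (f0 : (Fin d → Bool) → ℝ)
    -- the fitted regression tree model and its query-path split coordinates
    (fhat : Ω → (Fin d → Bool) → ℝ)
    (Jq : Ω → (Fin d → Bool) → Finset (Fin d))
    (Sc' : Finset (Finset (Fin d)))
    (T : Finset (Fin d)) (hT : ∀ S ∈ Sc', 2 ≤ (T ∩ S).card)
    (hJmeas : ∀ x, MeasurableSet {ω | ((Jq ω x) ∩ T).Nonempty})
    -- on the event `J(x) ∩ T = ∅` the prediction does not change when the
    -- coordinates of `x` in `T` are changed
    (hloc : ∀ ω x x', ¬ ((Jq ω x) ∩ T).Nonempty → (∀ j, j ∉ T → x j = x' j) →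
        fhat ω x = fhat ω x')
    (δ : ℝ) (hδ : ∀ x, (μ {ω | ((Jq ω x) ∩ T).Nonempty}).toReal ≤ δ) :
    ENNReal.ofReal ((1 - δ) * ∑ S ∈ Sc', fourierCoeff f0 S ^ 2) ≤
      ∫⁻ ω, ENNReal.ofReal (cubeRisk (fhat ω) f0) ∂μ := by
  set w : (Fin d → Bool) → ℝ := fun x => fiberVar T f0 x / 2 ^ d
  have hweight : ∑ S ∈ Sc', fourierCoeff f0 S ^ 2 ≤ ∑ x, w x := by
    rw [← Finset.sum_div]
    refine sum_sq_fourierCoeff_le_cubeMean_fiberVar T f0 fun S hS => ?_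
    rw [Finset.inter_comm, ← Finset.card_pos]
    linarith [hT S hS]
  have hrisk : ∀ ω, ∑ x, {ω | (Jq ω x ∩ T).Nonempty}ᶜ.indicator (fun _ => w x) ω ≤
      cubeRisk (fhat ω) f0 := by
    intro ω
    refine le_of_eq_of_le ?_ (cubeMean_indicator_fiberVar_le_cubeRisk T f0 (fhat ω)
      {x | (Jq ω x ∩ T).Nonempty} fun x hx a => hloc ω x _ hx fun j hj => ?_)
    · simp [w, cubeMean, Finset.sum_div, Set.indicator_apply, ite_div]
    · exact (Finset.piecewise_eq_of_notMem _ _ _ hj).symm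
  calc ENNReal.ofReal ((1 - δ) * ∑ S ∈ Sc', fourierCoeff f0 S ^ 2)
      ≤ ENNReal.ofReal ((1 - δ) * ∑ x, w x) := by
        refine ENNReal.ofReal_le_ofReal_iff'.2 ?_
        rcases le_total δ 1 with hδ1 | hδ1
        · exact Or.inl (mul_le_mul_of_nonneg_left hweight (sub_nonneg.2 hδ1))
        · exact Or.inr (mul_nonpos_of_nonpos_of_nonneg (sub_nonpos.2 hδ1)
            (Finset.sum_nonneg fun S _ => sq_nonneg _))
    _ ≤ ∫⁻ ω, ENNReal.ofReal
          (∑ x, {ω | (Jq ω x ∩ T).Nonempty}ᶜ.indicator (fun _ => w x) ω) ∂μ :=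
        ofReal_mul_sum_le_lintegral_sum_indicator_compl hJmeas
          (fun x => div_nonneg (cubeVar_nonneg _) (by positivity)) hδ
    _ ≤ ∫⁻ ω, ENNReal.ofReal (cubeRisk (fhat ω) f0) ∂μ :=
        lintegral_mono fun ω => ENNReal.ofReal_le_ofReal (hrisk ω)

/-- From traversal avoidance to a risk lower bound, tree
version.  For any regression tree model `fhat` (with query-path split sets
`Jq`), any subcollection `𝒮' ⊆ 𝒮` and any `T` with `|T ∩ S| ≥ 2` for all
`S ∈ 𝒮'`, the expected `L²` risk is at least `(1 - δ) Σ_{S ∈ 𝒮'} α_S²`, where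
`δ := max_x P{J(x; D_n, Θ) ∩ T ≠ ∅}`. -/
theorem traversal_avoidance_risk_lower_bound_tree
    {Ω : Type} [MeasurableSpace Ω]
    (μ : Measure Ω) [IsProbabilityMeasure μ]
    (d n s : ℕ)
    (X : Fin n → Ω → Fin d → Bool) (eps : Fin n → Ω → ℝ) (Y : Fin n → Ω → ℝ)
    (hXmeas : ∀ i, Measurable (X i)) (hepsmeas : ∀ i, Measurable (eps i))
    (hXunif : ∀ i, Measure.map (X i) μ = (PMF.uniformOfFintype (Fin d → Bool)).toMeasure)
    (hXiid : iIndepFun X μ)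
    (hepsiid : iIndepFun eps μ)
    (hepsident : ∀ i j, Measure.map (eps i) μ = Measure.map (eps j) μ)
    (hepsint : ∀ i, Integrable (eps i) μ)
    (hepsmean : ∀ i, ∫ ω, eps i ω ∂μ = 0)
    (hXeps : IndepFun (fun ω i => X i ω) (fun ω i => eps i ω) μ)
    (Sstar : Finset (Fin d)) (hcard : Sstar.card = s)
    (f0 : (Fin d → Bool) → ℝ)
    (hsparse : ∀ x x' : Fin d → Bool, (∀ j ∈ Sstar, x j = x' j) → f0 x = f0 x')
    (hY : ∀ i ω, Y i ω = f0 (X i ω) + eps i ω)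
    -- the fitted regression tree model and its query-path split coordinates
    (fhat : Ω → (Fin d → Bool) → ℝ)
    (Jq : Ω → (Fin d → Bool) → Finset (Fin d))
    (Sc' : Finset (Finset (Fin d))) (hSc' : Sc' ⊆ fourierSupport f0)
    (T : Finset (Fin d)) (hT : ∀ S ∈ Sc', 2 ≤ (T ∩ S).card)
    (hfmeas : ∀ x, Measurable fun ω => fhat ω x)
    (hJmeas : ∀ x, MeasurableSet {ω | ((Jq ω x) ∩ T).Nonempty})
    -- on the event `J(x) ∩ T = ∅` the prediction does not change when the
    -- coordinates of `x` in `T` are changed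
    (hloc : ∀ ω x x', ¬ ((Jq ω x) ∩ T).Nonempty → (∀ j, j ∉ T → x j = x' j) →
        fhat ω x = fhat ω x')
    -- the event depends on `x` only through `x_{[d] ∖ T}`
    (hev : ∀ ω x x', (∀ j, j ∉ T → x j = x' j) →
        (((Jq ω x) ∩ T).Nonempty ↔ ((Jq ω x') ∩ T).Nonempty))
    (δ : ℝ) (hδ : ∀ x, (μ {ω | ((Jq ω x) ∩ T).Nonempty}).toReal ≤ δ) :
    ENNReal.ofReal ((1 - δ) * ∑ S ∈ Sc', fourierCoeff f0 S ^ 2) ≤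
      ∫⁻ ω, ENNReal.ofReal (cubeRisk (fhat ω) f0) ∂μ :=
  traversal_avoidance_risk_lower_bound_tree_general μ d f0 fhat Jq Sc' T hT hJmeas hloc δ hδ

end GreedyTrees
end

section
/- (Generic MSP functions are stably MSP.) Let 𝒮 be a collection of subsets of {1,…,d} that satisfies MSP (i.e., its sets can be ordered S_1,…,S_r with |S_i ∖ (S_1 ∪ ⋯ ∪ S_{i−1})| ≤ 1 for every i). If the coefficient vector (α_S)_{S∈𝒮} is drawn from any probability measure on ℝ^{|𝒮|} that is absolutely continuous with respect to Lebesgue measure, then with probability one the function f* = Σ_{S∈𝒮} α_S χ_S satisfies SMSP. Equivalently, the set of coefficient vectors (α_S)_{S∈𝒮} ∈ ℝ^{|𝒮|} for which Σ_{S∈𝒮} α_S χ_S fails SMSP has Lebesgue measure zero. -/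
open MeasureTheory ProbabilityTheory

namespace GreedyTrees

variable {d n : ℕ}

/-! A restriction of `Σ_S α_S χ_S` to a subcube `(J, z)` has Fourier coefficient
`Σ_{S \ J = T} ± α_S` at `T`, a nonzero linear form in `α` whenever some `S ∈ 𝒮` has
`S \ J = T`. Off the finitely many hyperplanes where one of these forms vanishes, the Fourier
support of the restriction is exactly `{S \ J : S ∈ 𝒮}`, and deleting the coordinates `J`
from every set of a staircase ordering of `𝒮` leaves a staircase ordering of that image once
repeated sets are dropped, keeping first occurrences. -/

lemma listUnion_eq_sup (L : List (Finset (Fin d))) : listUnion L = L.toFinset.sup id := by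
  induction L with
  | nil => rfl
  | cons a l ih => simp [listUnion, ← ih]

lemma listUnion_map_sdiff (J : Finset (Fin d)) (L : List (Finset (Fin d))) :
    listUnion (L.map (· \ J)) = listUnion L \ J := by
  induction L with
  | nil => simp [listUnion]
  | cons a l ih =>
    simp only [listUnion, List.map_cons, List.foldr_cons] at ih ⊢
    rw [ih, Finset.union_sdiff_distrib]

lemma staircase_append_singleton {L : List (Finset (Fin d))} {a : Finset (Fin d)} :
    Staircase (L ++ [a]) ↔ Staircase L ∧ (a \ listUnion L).card ≤ 1 := by
  constructor
  · intro h
    refine ⟨fun i hi => ?_, by simpa using h L.length (by simp)⟩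
    simpa [List.getElem_append_left hi, List.take_append_of_le_length hi.le] using
      h i (by rw [List.length_append]; omega)
  · rintro ⟨hL, ha⟩ i hi
    rcases Nat.lt_or_ge i L.length with hi' | hi'
    · simpa [List.getElem_append_left hi', List.take_append_of_le_length hi'.le] using hL i hi'
    · obtain rfl : i = L.length := by
        rw [List.length_append, List.length_singleton] at hi; omega
      simpa using ha

lemma Staircase.map_sdiff {L : List (Finset (Fin d))} (hL : Staircase L) (J : Finset (Fin d)) :
    Staircase (L.map (· \ J)) := by
  intro i hi
  rw [List.get_eq_getElem, List.getElem_map, ← List.map_take, listUnion_map_sdiff]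
  refine (Finset.card_le_card fun x => ?_).trans (hL i (by simpa using hi))
  simp only [Finset.mem_sdiff]
  tauto

lemma msp_toFinset_of_staircase {L : List (Finset (Fin d))} (hL : Staircase L) :
    MSP L.toFinset := by
  induction L using List.reverseRecOn with
  | nil => exact ⟨[], rfl, List.nodup_nil, fun i h => absurd h (Nat.not_lt_zero i)⟩
  | append_singleton L a ih =>
    obtain ⟨hL, ha⟩ := staircase_append_singleton.1 hL
    obtain ⟨L', hL', hnd, hst⟩ := ih hL
    by_cases haL : a ∈ L
    · exact ⟨L', by simp [hL', haL], hnd, hst⟩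
    · refine ⟨L' ++ [a], by simp [hL'], ?_, ?_⟩
      · simp only [List.nodup_append, hnd, List.nodup_singleton, List.mem_singleton, true_and]
        rintro b hb _ rfl rfl
        exact haL (List.mem_toFinset.1 (hL' ▸ List.mem_toFinset.2 hb))
      · rw [staircase_append_singleton, listUnion_eq_sup, hL', ← listUnion_eq_sup]
        exact ⟨hst, ha⟩

lemma MSP.image_sdiff {Sc : Finset (Finset (Fin d))} (h : MSP Sc) (J : Finset (Fin d)) :
    MSP (Sc.image (· \ J)) := by
  obtain ⟨L, rfl, -, hL⟩ := h
  convert msp_toFinset_of_staircase (hL.map_sdiff J)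
  ext; simp

lemma sgn_ne_zero (b : Bool) : sgn b ≠ 0 := by cases b <;> norm_num [sgn]

lemma sum_chi_mul_chi (S T : Finset (Fin d)) :
    ∑ x, chi S x * chi T x = if S = T then (2 : ℝ) ^ d else 0 := by
  have hchi : ∀ (U : Finset (Fin d)) x, chi U x = ∏ j, if j ∈ U then sgn (x j) else 1 :=
    fun U x => by simp [chi, Finset.prod_ite_mem]
  have hcoord : ∀ j, ∑ b : Bool, (if j ∈ S then sgn b else 1) * (if j ∈ T then sgn b else 1)
      = if (j ∈ S ↔ j ∈ T) then 2 else 0 := fun j => by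
    by_cases hS : j ∈ S <;> by_cases hT : j ∈ T <;> norm_num [hS, hT, sgn]
  simp_rw [hchi, ← Finset.prod_mul_distrib]
  rw [← Fintype.prod_sum fun j b => (if j ∈ S then sgn b else 1) * (if j ∈ T then sgn b else 1),
    Finset.prod_congr rfl fun j _ => hcoord j]
  split_ifs with h
  · simp [h]
  · obtain ⟨j, hj⟩ := not_forall.1 (mt Finset.ext h)
    exact Finset.prod_eq_zero (Finset.mem_univ j) (if_neg hj)

lemma fourierCoeff_sum_mul_chi {ι : Type*} (s : Finset ι) (c : ι → ℝ)
    (S : ι → Finset (Fin d)) (T : Finset (Fin d)) :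
    fourierCoeff (fun x => ∑ i ∈ s, c i * chi (S i) x) T = ∑ i ∈ s with S i = T, c i := by
  simp only [fourierCoeff, cubeMean, Finset.sum_mul, mul_assoc]
  rw [Finset.sum_comm, Finset.sum_div, Finset.sum_filter]
  refine Finset.sum_congr rfl fun i _ => ?_
  rw [← Finset.mul_sum, sum_chi_mul_chi]
  split_ifs <;> simp

lemma chi_restrict (S J : Finset (Fin d)) (z x : Fin d → Bool) :
    chi S (fun j => if j ∈ J then z j else x j) = (∏ j ∈ S ∩ J, sgn (z j)) * chi (S \ J) x := by
  rw [chi, ← Finset.prod_inter_mul_prod_sdiff S J]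
  congr 1
  · exact Finset.prod_congr rfl fun j hj => by rw [if_pos (Finset.mem_inter.1 hj).2]
  · exact Finset.prod_congr rfl fun j hj => by rw [if_neg (Finset.mem_sdiff.1 hj).2]

lemma fourierCoeff_restrictCube_sum {ι : Type*} (s : Finset ι) (c : ι → ℝ)
    (S : ι → Finset (Fin d)) (J : Finset (Fin d)) (z : Fin d → Bool) (T : Finset (Fin d)) :
    fourierCoeff (restrictCube (fun x => ∑ i ∈ s, c i * chi (S i) x) J z) T
      = ∑ i ∈ s with S i \ J = T, (∏ j ∈ S i ∩ J, sgn (z j)) * c i := by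
  have hres : restrictCube (fun x => ∑ i ∈ s, c i * chi (S i) x) J z
      = fun x => ∑ i ∈ s, ((∏ j ∈ S i ∩ J, sgn (z j)) * c i) * chi (S i \ J) x := by
    funext x
    simp only [restrictCube, chi_restrict]
    exact Finset.sum_congr rfl fun i _ => by ring
  rw [hres, fourierCoeff_sum_mul_chi]

lemma fourierSupport_restrictCube_sum_subset {ι : Type*} (s : Finset ι) (c : ι → ℝ)
    (S : ι → Finset (Fin d)) (J : Finset (Fin d)) (z : Fin d → Bool) :
    fourierSupport (restrictCube (fun x => ∑ i ∈ s, c i * chi (S i) x) J z)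
      ⊆ s.image (S · \ J) := by
  intro T hT
  simp only [fourierSupport, Finset.mem_filter, Finset.mem_univ, true_and,
    fourierCoeff_restrictCube_sum] at hT
  obtain ⟨i, hi, -⟩ := Finset.exists_ne_zero_of_sum_ne_zero hT
  exact Finset.mem_image.2 ⟨i, (Finset.mem_filter.1 hi).1, (Finset.mem_filter.1 hi).2⟩

lemma volume_setOf_sum_mul_eq_zero {ι : Type*} [Fintype ι] {s : Finset ι} {w : ι → ℝ}
    (hw : ∃ i ∈ s, w i ≠ 0) : volume {α : ι → ℝ | ∑ i ∈ s, w i * α i = 0} = 0 := by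
  classical
  obtain ⟨i₀, hi₀, hw₀⟩ := hw
  let φ : (ι → ℝ) →ₗ[ℝ] ℝ := ∑ i ∈ s, w i • LinearMap.proj i
  have hφ : ∀ α, φ α = ∑ i ∈ s, w i * α i := fun α => by simp [φ]
  have hker : LinearMap.ker φ ≠ ⊤ := by
    rw [Ne, LinearMap.ker_eq_top]
    intro h
    simpa [hφ, Pi.single_apply, hi₀, hw₀] using LinearMap.congr_fun h (Pi.single i₀ 1)
  convert Measure.addHaar_submodule volume _ hker
  ext α
  simp [hφ]

lemma volume_setOf_fourierCoeff_restrictCube_eq_zero {ι : Type*} [Fintype ι] (s : Finset ι)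
    (S : ι → Finset (Fin d)) (J : Finset (Fin d)) (z : Fin d → Bool) {T : Finset (Fin d)}
    (hT : T ∈ s.image (S · \ J)) :
    volume {α : ι → ℝ |
      fourierCoeff (restrictCube (fun x => ∑ i ∈ s, α i * chi (S i) x) J z) T = 0} = 0 := by
  simp only [fourierCoeff_restrictCube_sum, Finset.sum_filter, ← ite_zero_mul]
  obtain ⟨i, hi, rfl⟩ := Finset.mem_image.1 hT
  refine volume_setOf_sum_mul_eq_zero ⟨i, hi, ?_⟩
  rw [if_pos rfl]
  exact Finset.prod_ne_zero_iff.2 fun j _ => sgn_ne_zero (z j)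

lemma setOf_not_smspFun_subset {ι : Type*} (s : Finset ι) (S : ι → Finset (Fin d))
    (hmsp : MSP (s.image S)) :
    {c : ι → ℝ | ¬ SMSPfun (fun x => ∑ i ∈ s, c i * chi (S i) x)} ⊆
      ⋃ (J) (z) (T ∈ s.image (S · \ J)),
        {c | fourierCoeff (restrictCube (fun x => ∑ i ∈ s, c i * chi (S i) x) J z) T = 0} := by
  intro c hc
  by_contra hc'
  refine hc fun J z => ?_
  have hsupp : fourierSupport (restrictCube (fun x => ∑ i ∈ s, c i * chi (S i) x) J z)
      = s.image (S · \ J) :=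
    (fourierSupport_restrictCube_sum_subset s c S J z).antisymm fun T hT => by
      simp only [Set.mem_iUnion, not_exists] at hc'
      simpa [fourierSupport] using hc' J z T hT
  rw [MSPfun, hsupp]
  simpa [Finset.image_image, Function.comp_def] using hmsp.image_sdiff J

theorem generic_msp_functions_are_smsp_general
    (d : ℕ) (Sc : Finset (Finset (Fin d))) (hmsp : MSP Sc)
    (P : Measure ({S // S ∈ Sc} → ℝ))
    (hac : P ≪ MeasureTheory.volume) :
    P {α | ¬ SMSPfun (fun x => ∑ S ∈ Sc.attach, α S * chi (S : Finset (Fin d)) x)} = 0 := by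
  rw [← Finset.attach_image_val (s := Sc)] at hmsp
  refine measure_mono_null (setOf_not_smspFun_subset Sc.attach Subtype.val hmsp) ?_
  simp only [measure_iUnion_null_iff]
  exact fun J z T hT => hac (volume_setOf_fourierCoeff_restrictCube_eq_zero _ _ J z hT)

/-- Generic MSP functions are stably MSP.  If the collection
`𝒮` satisfies MSP and the coefficient vector `(α_S)_{S ∈ 𝒮}` is drawn from a
probability measure on `ℝ^{|𝒮|}` absolutely continuous with respect to
Lebesgue measure, then almost surely `f* = Σ_S α_S χ_S` satisfies SMSP. -/
theorem generic_msp_functions_are_smsp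
    (d : ℕ) (Sc : Finset (Finset (Fin d))) (hmsp : MSP Sc)
    (P : Measure ({S // S ∈ Sc} → ℝ)) [IsProbabilityMeasure P]
    (hac : P ≪ MeasureTheory.volume) :
    P {α | ¬ SMSPfun (fun x => ∑ S ∈ Sc.attach, α S * chi (S : Finset (Fin d)) x)} = 0 :=
  generic_msp_functions_are_smsp_general d Sc hmsp P hac

end GreedyTrees
end
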